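/- Let M be an endoregular R-module. Then M is abelian endoregular if and only if whenever B is an M-generated submodule of M such that B ⊕ B embeds in M, then B = 0. -/

import Mathlib

def IsAbelianEndoregular (R M : Type*) [Ring R] [AddCommGroup M] [Module R M] : Prop :=
  (∀ s : Module.End R M, ∃ t : Module.End R M, s * t * s = s) ∧
  (∀ e : Module.End R M, e * e = e → ∀ s : Module.End R M, e * s = s * e)

def IsMGenerated {R M : Type*} [Ring R] [AddCommGroup M] [Module R M]
    (N : Submodule R M) : Prop :=
  N = ⨆ f : {f : Module.End R M // LinearMap.range f ≤ N}, LinearMap.range f.val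

/-!
Forward direction: if `B ⊕ B` embeds in `M` via `f` and `g : M → B`, then `h₁ = f ∘ inl ∘ g` and
`h₂ = f ∘ inr ∘ g` have the same kernel and independent images. Writing `h₁ = h₁ t h₁`, the
idempotent `E = h₁ t` is central and `ker h₁ ≤ ker h₂`, so
`h₂ = h₂ t h₁ = h₂ t E h₁ = E h₂ t h₁ = E h₂` has image inside `range h₁`. Hence `h₂ = 0`, so `g = 0`; as `B` is `M`-generated, `B = 0`.

Backward direction: if `a² = 0` and `a t a = a`, then `(x, y) ↦ t x + y` embeds
`a M ⊕ a M` in `M`, so `a M = 0`. Thus `End(M)` is reduced, and idempotents of a reduced ring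
are central.
-/

theorem IsIdempotentElem.mul_comm_of_forall_mul_self_eq_zero {A : Type*} [Ring A]
    (hA : ∀ a : A, a * a = 0 → a = 0) {e : A} (he : IsIdempotentElem e) (s : A) :
    e * s = s * e := by
  have hleft : e * s * (1 - e) = 0 := hA _ <| by
    calc e * s * (1 - e) * (e * s * (1 - e)) = e * s * (e - e * e) * s * (1 - e) := by
          noncomm_ring
      _ = 0 := by rw [he.eq, sub_self, mul_zero, zero_mul, zero_mul]
  have hright : (1 - e) * s * e = 0 := hA _ <| by
    calc (1 - e) * s * e * ((1 - e) * s * e) = (1 - e) * s * (e - e * e) * s * e := by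
          noncomm_ring
      _ = 0 := by rw [he.eq, sub_self, mul_zero, zero_mul, zero_mul]
  have hdiff : e * s - s * e = e * s * (1 - e) - (1 - e) * s * e := by noncomm_ring
  rwa [hleft, hright, sub_zero, sub_eq_zero] at hdiff

namespace Module.End

variable {R M : Type*} [Ring R] [AddCommGroup M] [Module R M]

open LinearMap

theorem isMGenerated_range (a : Module.End R M) : IsMGenerated (range a) :=
  le_antisymm (le_iSup (fun f : {f : Module.End R M // range f ≤ range a} ↦ range f.val)
    ⟨a, le_rfl⟩) (iSup_le fun f ↦ f.2)

theorem eq_bot_of_isMGenerated {B : Submodule R M} (hB : IsMGenerated B)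
    (h : ∀ g : Module.End R M, range g ≤ B → g = 0) : B = ⊥ := by
  rw [hB, eq_bot_iff]
  exact iSup_le fun g ↦ by rw [h g.1 g.2, range_zero]

theorem exists_injective_prod_range_of_mul_self_eq_zero {a t : Module.End R M}
    (hat : a * t * a = a) (ha : a * a = 0) :
    ∃ f : (range a × range a) →ₗ[R] M, Function.Injective f := by
  refine ⟨(t ∘ₗ (range a).subtype).coprod (range a).subtype, ?_⟩
  rw [← ker_eq_bot, eq_bot_iff]
  rintro ⟨⟨_, m, rfl⟩, ⟨_, n, rfl⟩⟩ hmn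
  have hsum : t (a m) + a n = 0 := hmn
  have hm : a m = 0 := by
    have h := congrArg a hsum
    rwa [map_add, map_zero, show a (t (a m)) = (a * t * a) m from rfl,
      show a (a n) = (a * a) n from rfl, hat, ha, LinearMap.zero_apply, add_zero] at h
  rw [hm, map_zero, zero_add] at hsum
  simp [hm, hsum]

theorem eq_zero_of_ker_le_of_disjoint_range
    (hcent : ∀ e : Module.End R M, e * e = e → ∀ s : Module.End R M, e * s = s * e)
    {h₁ h₂ t : Module.End R M} (ht : h₁ * t * h₁ = h₁) (hker : ker h₁ ≤ ker h₂)
    (hdisj : Disjoint (range h₁) (range h₂)) : h₂ = 0 := by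
  have hE : h₁ * t * (h₁ * t) = h₁ * t := by rw [← mul_assoc, ht]
  have hfactor : h₂ = h₂ * t * h₁ := by
    ext x
    have hx : x - t (h₁ x) ∈ ker h₁ := by
      rw [mem_ker, map_sub, ← mul_apply, ← mul_apply, ht, sub_self]
    simpa [sub_eq_zero] using hker hx
  have hleft : h₂ = h₁ * t * h₂ := by
    calc h₂ = h₂ * t * (h₁ * t * h₁) := by rw [ht]; exact hfactor
      _ = h₂ * t * (h₁ * t) * h₁ := by simp only [mul_assoc]
      _ = h₁ * t * (h₂ * t) * h₁ := by rw [hcent _ hE]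
      _ = h₁ * t * (h₂ * t * h₁) := by simp only [mul_assoc]
      _ = h₁ * t * h₂ := by rw [← hfactor]
  rw [← range_eq_bot]
  refine hdisj.eq_bot_of_ge ?_
  rw [hleft, mul_assoc]
  exact range_comp_le_range _ _

theorem eq_zero_of_range_le_of_injective_prod
    (hreg : ∀ s : Module.End R M, ∃ t : Module.End R M, s * t * s = s)
    (hcent : ∀ e : Module.End R M, e * e = e → ∀ s : Module.End R M, e * s = s * e)
    {B : Submodule R M} {f : (B × B) →ₗ[R] M} (hf : Function.Injective f)
    {g : Module.End R M} (hg : range g ≤ B) : g = 0 := by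
  set g' : M →ₗ[R] B := g.codRestrict B fun x ↦ hg ⟨x, rfl⟩
  have hker_f : ker f = ⊥ := ker_eq_bot.mpr hf
  have hker_inl : ker (f ∘ₗ inl R B B ∘ₗ g') = ker g' := by
    rw [ker_comp_of_ker_eq_bot _ hker_f, ker_comp_of_ker_eq_bot _ (ker_eq_bot.mpr inl_injective)]
  have hker_inr : ker (f ∘ₗ inr R B B ∘ₗ g') = ker g' := by
    rw [ker_comp_of_ker_eq_bot _ hker_f, ker_comp_of_ker_eq_bot _ (ker_eq_bot.mpr inr_injective)]
  have hdisj : Disjoint (range (f ∘ₗ inl R B B ∘ₗ g')) (range (f ∘ₗ inr R B B ∘ₗ g')) := by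
    refine (Submodule.disjoint_map hf disjoint_inl_inr).mono ?_ ?_ <;> rw [← range_comp]
    exacts [range_comp_le_range g' (f ∘ₗ inl R B B), range_comp_le_range g' (f ∘ₗ inr R B B)]
  obtain ⟨t, ht⟩ := hreg (f ∘ₗ inl R B B ∘ₗ g')
  have hzero := eq_zero_of_ker_le_of_disjoint_range hcent ht
    (hker_inl.trans hker_inr.symm).le hdisj
  have hg' : g' = 0 := by
    rw [← ker_eq_top, ← hker_inr, hzero]
    exact ker_zero
  ext x
  exact congrArg Subtype.val (LinearMap.congr_fun hg' x)

end Module.End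

open Module.End in
theorem stmt_10 {R M : Type*} [Ring R] [AddCommGroup M] [Module R M]
    (hM : ∀ s : Module.End R M, ∃ t : Module.End R M, s * t * s = s) :
    IsAbelianEndoregular R M ↔
      ∀ B : Submodule R M, IsMGenerated B →
        (∃ f : (B × B) →ₗ[R] M, Function.Injective f) → B = ⊥ := by
  constructor
  · rintro ⟨-, hcent⟩ B hB ⟨f, hf⟩
    exact eq_bot_of_isMGenerated hB fun g hg ↦
      eq_zero_of_range_le_of_injective_prod hM hcent hf hg
  · intro h
    have hreduced : ∀ a : Module.End R M, a * a = 0 → a = 0 := fun a ha ↦ by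
      obtain ⟨t, hat⟩ := hM a
      exact LinearMap.range_eq_bot.mp
        (h _ (isMGenerated_range a) (exists_injective_prod_range_of_mul_self_eq_zero hat ha))
    exact ⟨hM, fun e he ↦ IsIdempotentElem.mul_comm_of_forall_mul_self_eq_zero hreduced he⟩
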